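/- Let L ≥ 1, N = 2^L, and let S^1, …, S^L be the butterfly supports of size N. Let X_L, …, X_1 be complex N×N matrices with supp(X_ℓ) = S^ℓ exactly for every 1 ≤ ℓ ≤ L, and set Z := X_L X_{L−1} ⋯ X_1. Then for every tuple (X'_L, …, X'_1) of complex N×N matrices with supp(X'_ℓ) ⊆ S^ℓ for all ℓ and X'_L ⋯ X'_1 = Z, there exist invertible diagonal N×N matrices D_1, …, D_{L−1} such that, with the convention D_0 = D_L = I_N, X'_ℓ = D_ℓ⁻¹ X_ℓ D_{ℓ−1} for every 1 ≤ ℓ ≤ L. -/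

import Mathlib

open Matrix

/-- The support of a matrix: the set of index pairs of its nonzero entries. -/
def msupp {N : ℕ} (M : Matrix (Fin N) (Fin N) ℂ) : Set (Fin N × Fin N) :=
  {p | M p.1 p.2 ≠ 0}

/-- The `ℓ`-th butterfly support `S^ℓ := I_{2^{L−ℓ}} ⊗ U_2 ⊗ I_{2^{ℓ−1}}` of size
`2^L × 2^L` (with `U_2` the 2×2 all-ones matrix): the entry `(i, j)` is nonzero iff
`i / 2^ℓ = j / 2^ℓ` and `i % 2^{ℓ−1} = j % 2^{ℓ−1}`. -/
def butterflySupp (L ℓ : ℕ) : Set (Fin (2 ^ L) × Fin (2 ^ L)) :=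
  {x | (x.1 : ℕ) / 2 ^ ℓ = (x.2 : ℕ) / 2 ^ ℓ ∧
       (x.1 : ℕ) % 2 ^ (ℓ - 1) = (x.2 : ℕ) % 2 ^ (ℓ - 1)}

/-- The partial product `X_q · X_{q−1} · ⋯ · X_p`. -/
noncomputable def pprod {N : ℕ} (X : ℕ → Matrix (Fin N) (Fin N) ℂ) (q p : ℕ) :
    Matrix (Fin N) (Fin N) ℂ :=
  (((List.range' p (q + 1 - p)).reverse).map X).prod

/-- Generalized butterfly pattern. -/
def GP (L q t : ℕ) : Set (Fin (2 ^ L) × Fin (2 ^ L)) :=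
  {x | (x.1 : ℕ) / 2 ^ q = (x.2 : ℕ) / 2 ^ q ∧ (x.1 : ℕ) % 2 ^ t = (x.2 : ℕ) % 2 ^ t}

lemma butterflySupp_eq_GP (L ℓ : ℕ) : butterflySupp L ℓ = GP L ℓ (ℓ - 1) := rfl

lemma pprod_nil {N : ℕ} (X : ℕ → Matrix (Fin N) (Fin N) ℂ) (q p : ℕ) (h : q + 1 ≤ p) :
    pprod X q p = 1 := by
  unfold pprod
  rw [Nat.sub_eq_zero_of_le h]
  simp

lemma pprod_succ {N : ℕ} (X : ℕ → Matrix (Fin N) (Fin N) ℂ) (r p : ℕ) (h : p ≤ r + 1) :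
    pprod X (r + 1) p = X (r + 1) * pprod X r p := by
  unfold pprod
  have h1 : r + 1 + 1 - p = (r + 1 - p) + 1 := by omega
  rw [h1, List.range'_concat]
  have h2 : p + 1 * (r + 1 - p) = r + 1 := by omega
  rw [h2]
  simp

lemma pprod_split {N : ℕ} (X : ℕ → Matrix (Fin N) (Fin N) ℂ) (q r p : ℕ)
    (h1 : p ≤ r + 1) (h2 : r ≤ q) :
    pprod X q p = pprod X q (r + 1) * pprod X r p := by
  unfold pprod
  have key : List.range' p (r + 1 - p) ++ List.range' (r + 1) (q - r) =
      List.range' p (q + 1 - p) := by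
    have := @List.range'_append p (r + 1 - p) (q - r) 1
    have e1 : p + 1 * (r + 1 - p) = r + 1 := by omega
    have e2 : r + 1 - p + (q - r) = q + 1 - p := by omega
    rw [e1, e2] at this
    exact this
  rw [← key]
  simp

/-- The unique middle index in a butterfly product. -/
def mid (L t : ℕ) (ht : t ≤ L) (i j : Fin (2 ^ L)) : Fin (2 ^ L) :=
  ⟨(j : ℕ) / 2 ^ t * 2 ^ t + (i : ℕ) % 2 ^ t, by
    have hmod : (i : ℕ) % 2 ^ t < 2 ^ t := Nat.mod_lt _ (Nat.two_pow_pos t)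
    have hdiv : (j : ℕ) / 2 ^ t < 2 ^ (L - t) := by
      apply Nat.div_lt_of_lt_mul
      calc (j : ℕ) < 2 ^ L := j.isLt
        _ = 2 ^ t * 2 ^ (L - t) := by rw [← pow_add]; congr 1; omega
    calc (j : ℕ) / 2 ^ t * 2 ^ t + (i : ℕ) % 2 ^ t
        < ((j : ℕ) / 2 ^ t + 1) * 2 ^ t := by
          rw [add_mul, one_mul]; omega
      _ ≤ 2 ^ (L - t) * 2 ^ t := Nat.mul_le_mul_right _ hdiv
      _ = 2 ^ L := by rw [← pow_add]; congr 1; omega⟩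

lemma mid_mod (L t : ℕ) (ht : t ≤ L) (i j : Fin (2 ^ L)) :
    (mid L t ht i j : ℕ) % 2 ^ t = (i : ℕ) % 2 ^ t := by
  show ((j : ℕ) / 2 ^ t * 2 ^ t + (i : ℕ) % 2 ^ t) % 2 ^ t = (i : ℕ) % 2 ^ t
  rw [mul_comm, Nat.mul_add_mod, Nat.mod_mod_of_dvd _ dvd_rfl]

lemma mid_div (L t : ℕ) (ht : t ≤ L) (i j : Fin (2 ^ L)) :
    (mid L t ht i j : ℕ) / 2 ^ t = (j : ℕ) / 2 ^ t := by
  show ((j : ℕ) / 2 ^ t * 2 ^ t + (i : ℕ) % 2 ^ t) / 2 ^ t = (j : ℕ) / 2 ^ t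
  have hpos : 0 < 2 ^ t := Nat.two_pow_pos t
  rw [mul_comm, Nat.mul_add_div hpos, Nat.div_eq_of_lt (Nat.mod_lt _ hpos), add_zero]

lemma eq_mid (L t : ℕ) (ht : t ≤ L) (i j k : Fin (2 ^ L))
    (h1 : (k : ℕ) % 2 ^ t = (i : ℕ) % 2 ^ t) (h2 : (k : ℕ) / 2 ^ t = (j : ℕ) / 2 ^ t) :
    k = mid L t ht i j := by
  apply Fin.ext
  show (k : ℕ) = (j : ℕ) / 2 ^ t * 2 ^ t + (i : ℕ) % 2 ^ t
  rw [← h1, ← h2, mul_comm]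
  exact (Nat.div_add_mod _ _).symm

lemma mid_self (L t : ℕ) (ht : t ≤ L) (i j : Fin (2 ^ L))
    (h : (i : ℕ) / 2 ^ t = (j : ℕ) / 2 ^ t) : mid L t ht i j = i :=
  (eq_mid L t ht i j i rfl h).symm

lemma mid_right (L t : ℕ) (ht : t ≤ L) (i j : Fin (2 ^ L))
    (h : (i : ℕ) % 2 ^ t = (j : ℕ) % 2 ^ t) : mid L t ht i j = j :=
  (eq_mid L t ht i j j h.symm rfl).symm

lemma div_pow_trans {a : ℕ} (t q : ℕ) (h : t ≤ q) (b : ℕ) (hb : a / 2 ^ t = b / 2 ^ t) :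
    a / 2 ^ q = b / 2 ^ q := by
  have e : ∀ c : ℕ, c / 2 ^ q = c / 2 ^ t / 2 ^ (q - t) := by
    intro c
    rw [Nat.div_div_eq_div_mul, ← pow_add]
    congr 2
    omega
  rw [e a, e b, hb]

lemma mod_pow_trans {a : ℕ} (s t : ℕ) (h : s ≤ t) (b : ℕ) (hb : a % 2 ^ t = b % 2 ^ t) :
    a % 2 ^ s = b % 2 ^ s := by
  have e : ∀ c : ℕ, c % 2 ^ s = c % 2 ^ t % 2 ^ s := fun c =>
    (Nat.mod_mod_of_dvd c (pow_dvd_pow 2 h)).symm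
  rw [e a, e b, hb]

/-- Key structural lemma: the product of two butterfly-patterned matrices has a single
term in each entry's sum. -/
lemma mul_key (L q t s : ℕ) (hs : s ≤ t) (htq : t ≤ q) (hq : q ≤ L)
    (M N : Matrix (Fin (2 ^ L)) (Fin (2 ^ L)) ℂ)
    (hM : msupp M ⊆ GP L q t) (hN : msupp N ⊆ GP L t s) (i j : Fin (2 ^ L)) :
    ((i, j) ∈ GP L q s →
      (M * N) i j = M i (mid L t (htq.trans hq) i j) * N (mid L t (htq.trans hq) i j) j ∧
      (i, mid L t (htq.trans hq) i j) ∈ GP L q t ∧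
      (mid L t (htq.trans hq) i j, j) ∈ GP L t s) ∧
    ((i, j) ∉ GP L q s → (M * N) i j = 0) := by
  set k := mid L t (htq.trans hq) i j with hk
  have hsingle : (M * N) i j = M i k * N k j := by
    rw [Matrix.mul_apply]
    apply Finset.sum_eq_single
    · intro b _ hb
      by_contra hcon
      have hM' : M i b ≠ 0 := left_ne_zero_of_mul hcon
      have hN' : N b j ≠ 0 := right_ne_zero_of_mul hcon
      have h1 := hN (show (b, j) ∈ msupp N from hN')
      have h2 := hM (show (i, b) ∈ msupp M from hM')
      exact hb (eq_mid L t (htq.trans hq) i j b h2.2.symm h1.1)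
    · intro h
      exact absurd (Finset.mem_univ k) h
  constructor
  · intro hij
    have hkd : (k : ℕ) / 2 ^ q = (j : ℕ) / 2 ^ q :=
      div_pow_trans t q htq _ (mid_div L t (htq.trans hq) i j)
    have hkm : (k : ℕ) % 2 ^ s = (i : ℕ) % 2 ^ s :=
      mod_pow_trans s t hs _ (mid_mod L t (htq.trans hq) i j)
    exact ⟨hsingle, ⟨hij.1.trans hkd.symm, (mid_mod L t (htq.trans hq) i j).symm⟩,
      ⟨mid_div L t (htq.trans hq) i j, hkm.trans hij.2⟩⟩
  · intro hij
    rw [hsingle]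
    by_contra hcon
    have hM' : M i k ≠ 0 := left_ne_zero_of_mul hcon
    have hN' : N k j ≠ 0 := right_ne_zero_of_mul hcon
    have h1 := hM (show (i, k) ∈ msupp M from hM')
    have h2 := hN (show (k, j) ∈ msupp N from hN')
    exact hij ⟨h1.1.trans (div_pow_trans t q htq _ h2.1),
      (mod_pow_trans s t hs _ h1.2).trans h2.2⟩

lemma msupp_one_subset {L q t : ℕ} : msupp (1 : Matrix (Fin (2 ^ L)) (Fin (2 ^ L)) ℂ) ⊆ GP L q t := by
  rintro ⟨a, b⟩ hab
  have : (1 : Matrix (Fin (2 ^ L)) (Fin (2 ^ L)) ℂ) a b ≠ 0 := hab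
  have hab' : a = b := by
    by_contra hne
    exact this (Matrix.one_apply_ne hne)
  exact ⟨by rw [hab'], by rw [hab']⟩

lemma pprod_struct (L : ℕ) (M : ℕ → Matrix (Fin (2 ^ L)) (Fin (2 ^ L)) ℂ) (p : ℕ) (hp : 1 ≤ p) :
    ∀ q, q ≤ L → (∀ ℓ, p ≤ ℓ → ℓ ≤ q → msupp (M ℓ) ⊆ GP L ℓ (ℓ - 1)) →
    msupp (pprod M q p) ⊆ GP L q (p - 1) := by
  intro q
  induction q with
  | zero =>
    intro _ _
    rw [pprod_nil M 0 p (by omega)]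
    exact msupp_one_subset
  | succ n ih =>
    intro hq hM
    by_cases hpn : p ≤ n + 1
    · rw [pprod_succ M n p hpn]
      intro x hx
      by_contra hnot
      have hMn : msupp (M (n + 1)) ⊆ GP L (n + 1) n := hM (n + 1) hpn le_rfl
      have hN : msupp (pprod M n p) ⊆ GP L n (p - 1) :=
        ih (by omega) (fun ℓ h1 h2 => hM ℓ h1 (by omega))
      have := (mul_key L (n + 1) n (p - 1) (by omega) (by omega) hq
        (M (n + 1)) (pprod M n p) hMn hN x.1 x.2).2
      exact hx (this hnot)
    · rw [pprod_nil M (n + 1) p (by omega)]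
      exact msupp_one_subset

lemma pprod_ne_zero (L : ℕ) (X : ℕ → Matrix (Fin (2 ^ L)) (Fin (2 ^ L)) ℂ)
    (hsupp : ∀ ℓ, 1 ≤ ℓ → ℓ ≤ L → msupp (X ℓ) = butterflySupp L ℓ) :
    ∀ q, q ≤ L → ∀ i j : Fin (2 ^ L), (i : ℕ) / 2 ^ q = (j : ℕ) / 2 ^ q →
    pprod X q 1 i j ≠ 0 := by
  intro q
  induction q with
  | zero =>
    intro _ i j hij
    have : i = j := Fin.ext (by simpa using hij)
    rw [pprod_nil X 0 1 le_rfl, this, Matrix.one_apply_eq]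
    exact one_ne_zero
  | succ n ih =>
    intro hq i j hij
    rw [pprod_succ X n 1 (by omega)]
    have hMn : msupp (X (n + 1)) ⊆ GP L (n + 1) n := by
      rw [hsupp (n + 1) (by omega) hq]
      exact subset_of_eq (butterflySupp_eq_GP L (n + 1))
    have hN : msupp (pprod X n 1) ⊆ GP L n 0 :=
      pprod_struct L X 1 le_rfl n (by omega)
        (fun ℓ h1 h2 => by rw [hsupp ℓ h1 (by omega)]; exact subset_of_eq (butterflySupp_eq_GP L ℓ))
    obtain ⟨heq, hik, hkj⟩ := (mul_key L (n + 1) n 0 (by omega) (by omega) hq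
      (X (n + 1)) (pprod X n 1) hMn hN i j).1 ⟨hij, by simp [Nat.mod_one]⟩
    rw [heq]
    apply mul_ne_zero
    · have : (i, mid L n (by omega : n ≤ L) i j) ∈ butterflySupp L (n + 1) := hik
      rw [← hsupp (n + 1) (by omega) hq] at this
      exact this
    · exact ih (by omega) _ j hkj.1

lemma diag_mul_diag_apply {N : ℕ} (f g : Fin N → ℂ) (M : Matrix (Fin N) (Fin N) ℂ)
    (i j : Fin N) :
    (Matrix.diagonal f * M * Matrix.diagonal g) i j = f i * M i j * g j := by
  rw [Matrix.mul_diagonal, Matrix.diagonal_mul]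

/-- Let `L ≥ 1`, `N = 2^L`, and `X_L, …, X_1` complex `N × N` matrices
with `supp X_ℓ = S^ℓ` (the butterfly supports) exactly; set `Z := X_L ⋯ X_1`.  Then for
every tuple `(X'_L, …, X'_1)` with `supp X'_ℓ ⊆ S^ℓ` and `X'_L ⋯ X'_1 = Z`, there are
invertible diagonal matrices `D_1, …, D_{L−1}` such that, with `D_0 = D_L = I`,
`X'_ℓ = D_ℓ⁻¹ X_ℓ D_{ℓ−1}` for every `1 ≤ ℓ ≤ L`. -/
theorem butterfly_S_unique_MEMF (L : ℕ) (hL : 1 ≤ L)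
    (X : ℕ → Matrix (Fin (2 ^ L)) (Fin (2 ^ L)) ℂ)
    (hsupp : ∀ ℓ, 1 ≤ ℓ → ℓ ≤ L → msupp (X ℓ) = butterflySupp L ℓ)
    (X' : ℕ → Matrix (Fin (2 ^ L)) (Fin (2 ^ L)) ℂ)
    (hsupp' : ∀ ℓ, 1 ≤ ℓ → ℓ ≤ L → msupp (X' ℓ) ⊆ butterflySupp L ℓ)
    (hprod : pprod X' L 1 = pprod X L 1) :
    ∃ d : ℕ → Fin (2 ^ L) → ℂ, (∀ ℓ i, d ℓ i ≠ 0) ∧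
      (∀ i, d 0 i = 1) ∧ (∀ i, d L i = 1) ∧
      ∀ ℓ, 1 ≤ ℓ → ℓ ≤ L →
        X' ℓ = Matrix.diagonal (fun i => (d ℓ i)⁻¹) * X ℓ * Matrix.diagonal (d (ℓ - 1)) := by
  have hX'GP : ∀ ℓ, 1 ≤ ℓ → ℓ ≤ L → msupp (X' ℓ) ⊆ GP L ℓ (ℓ - 1) := fun ℓ h1 h2 =>
    (hsupp' ℓ h1 h2).trans (subset_of_eq (butterflySupp_eq_GP L ℓ))
  have hXGP : ∀ ℓ, 1 ≤ ℓ → ℓ ≤ L → msupp (X ℓ) ⊆ GP L ℓ (ℓ - 1) := fun ℓ h1 h2 =>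
    (subset_of_eq (hsupp ℓ h1 h2)).trans (subset_of_eq (butterflySupp_eq_GP L ℓ))
  have hY'supp : ∀ q, q ≤ L → msupp (pprod X' q 1) ⊆ GP L q 0 := fun q hq =>
    pprod_struct L X' 1 le_rfl q hq (fun ℓ h1 h2 => hX'GP ℓ h1 (by omega))
  have hYsupp : ∀ q, q ≤ L → msupp (pprod X q 1) ⊆ GP L q 0 := fun q hq =>
    pprod_struct L X 1 le_rfl q hq (fun ℓ h1 h2 => hXGP ℓ h1 (by omega))
  have hZne : ∀ i j : Fin (2 ^ L), pprod X L 1 i j ≠ 0 := fun i j =>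
    pprod_ne_zero L X hsupp L le_rfl i j
      (by rw [Nat.div_eq_of_lt i.isLt, Nat.div_eq_of_lt j.isLt])
  have hYkk : ∀ ℓ, ℓ ≤ L → ∀ k : Fin (2 ^ L), pprod X ℓ 1 k k ≠ 0 := fun ℓ hℓ k =>
    pprod_ne_zero L X hsupp ℓ hℓ k k rfl
  -- the key proportionality claim
  have key : ∀ ℓ, ℓ ≤ L → ∀ k j : Fin (2 ^ L), (k : ℕ) / 2 ^ ℓ = (j : ℕ) / 2 ^ ℓ →
      pprod X' ℓ 1 k k ≠ 0 ∧
      pprod X ℓ 1 k k * pprod X' ℓ 1 k j = pprod X' ℓ 1 k k * pprod X ℓ 1 k j := by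
    intro ℓ hℓ k j hkj
    have hA' : msupp (pprod X' L (ℓ + 1)) ⊆ GP L L ℓ :=
      pprod_struct L X' (ℓ + 1) (by omega) L le_rfl (fun m h1 h2 => hX'GP m (by omega) h2)
    have hA : msupp (pprod X L (ℓ + 1)) ⊆ GP L L ℓ :=
      pprod_struct L X (ℓ + 1) (by omega) L le_rfl (fun m h1 h2 => hXGP m (by omega) h2)
    have htop : ∀ a b : Fin (2 ^ L), (a, b) ∈ GP L L 0 := fun a b =>
      ⟨by rw [Nat.div_eq_of_lt a.isLt, Nat.div_eq_of_lt b.isLt], by simp [Nat.mod_one]⟩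
    have mk1 := ((mul_key L L ℓ 0 (Nat.zero_le _) hℓ le_rfl _ _ hA' (hY'supp ℓ hℓ) k j).1
      (htop k j)).1
    have mk2 := ((mul_key L L ℓ 0 (Nat.zero_le _) hℓ le_rfl _ _ hA' (hY'supp ℓ hℓ) k k).1
      (htop k k)).1
    have mk3 := ((mul_key L L ℓ 0 (Nat.zero_le _) hℓ le_rfl _ _ hA (hYsupp ℓ hℓ) k j).1
      (htop k j)).1
    have mk4 := ((mul_key L L ℓ 0 (Nat.zero_le _) hℓ le_rfl _ _ hA (hYsupp ℓ hℓ) k k).1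
      (htop k k)).1
    rw [mid_self L ℓ hℓ k j hkj] at mk1 mk3
    rw [mid_self L ℓ hℓ k k rfl] at mk2 mk4
    have hsplit' : pprod X' L 1 = pprod X' L (ℓ + 1) * pprod X' ℓ 1 :=
      pprod_split X' L ℓ 1 (by omega) hℓ
    have hsplit : pprod X L 1 = pprod X L (ℓ + 1) * pprod X ℓ 1 :=
      pprod_split X L ℓ 1 (by omega) hℓ
    have e1 : pprod X L 1 k j = pprod X' L (ℓ + 1) k k * pprod X' ℓ 1 k j := by
      rw [← hprod, hsplit']; exact mk1
    have e2 : pprod X L 1 k k = pprod X' L (ℓ + 1) k k * pprod X' ℓ 1 k k := by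
      rw [← hprod, hsplit']; exact mk2
    have e3 : pprod X L 1 k j = pprod X L (ℓ + 1) k k * pprod X ℓ 1 k j := by
      rw [hsplit]; exact mk3
    have e4 : pprod X L 1 k k = pprod X L (ℓ + 1) k k * pprod X ℓ 1 k k := by
      rw [hsplit]; exact mk4
    have ha' : pprod X' L (ℓ + 1) k k ≠ 0 := left_ne_zero_of_mul (e2 ▸ hZne k k)
    have hY'kk : pprod X' ℓ 1 k k ≠ 0 := right_ne_zero_of_mul (e2 ▸ hZne k k)
    refine ⟨hY'kk, ?_⟩
    apply mul_left_cancel₀ ha'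
    linear_combination pprod X ℓ 1 k k * e3 - pprod X ℓ 1 k k * e1
      + pprod X ℓ 1 k j * e2 - pprod X ℓ 1 k j * e4
  have hY'kk : ∀ ℓ, ℓ ≤ L → ∀ k : Fin (2 ^ L), pprod X' ℓ 1 k k ≠ 0 := fun ℓ hℓ k =>
    (key ℓ hℓ k k rfl).1
  -- define the diagonal scalars
  set d : ℕ → Fin (2 ^ L) → ℂ := fun m k =>
    if 1 ≤ m ∧ m < L then pprod X m 1 k k / pprod X' m 1 k k else 1 with hd
  have hdne : ∀ m k, d m k ≠ 0 := by
    intro m k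
    rw [hd]
    by_cases h : 1 ≤ m ∧ m < L
    · simp only [h, if_true]
      exact div_ne_zero (hYkk m (by omega) k) (hY'kk m (by omega) k)
    · simp only [h, if_false]
      exact one_ne_zero
  have hdrel : ∀ m, m ≤ L → ∀ k : Fin (2 ^ L),
      d m k * pprod X' m 1 k k = pprod X m 1 k k := by
    intro m hm k
    rw [hd]
    by_cases h : 1 ≤ m ∧ m < L
    · simp only [h, if_true]
      exact div_mul_cancel₀ _ (hY'kk m (by omega) k)
    · simp only [h, if_false, one_mul]
      rcases Nat.lt_or_ge m 1 with hm0 | hm1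
      · interval_cases m
        rw [pprod_nil X' 0 1 le_rfl, pprod_nil X 0 1 le_rfl]
      · have hmeq : m = L := by omega
        subst hmeq
        rw [hprod]
  refine ⟨d, hdne, ?_, ?_, ?_⟩
  · intro k; simp [hd]
  · intro k; simp [hd]
  · intro ℓ h1 h2
    obtain ⟨r, rfl⟩ : ∃ r, ℓ = r + 1 := ⟨ℓ - 1, by omega⟩
    ext i j
    simp only [diag_mul_diag_apply, Nat.add_sub_cancel]
    by_cases hmem : (i, j) ∈ butterflySupp L (r + 1)
    · obtain ⟨hdivm, hmodm⟩ := hmem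
      have hrL : r ≤ L := by omega
      have mk' := ((mul_key L (r + 1) r 0 (Nat.zero_le _) (by omega) h2 (X' (r + 1))
        (pprod X' r 1) (hX'GP (r + 1) (by omega) h2) (hY'supp r hrL) i j).1
        ⟨hdivm, by simp [Nat.mod_one]⟩).1
      have mkx := ((mul_key L (r + 1) r 0 (Nat.zero_le _) (by omega) h2 (X (r + 1))
        (pprod X r 1) (hXGP (r + 1) (by omega) h2) (hYsupp r hrL) i j).1
        ⟨hdivm, by simp [Nat.mod_one]⟩).1
      rw [mid_right L r hrL i j hmodm] at mk' mkx
      have eY' : pprod X' (r + 1) 1 i j = X' (r + 1) i j * pprod X' r 1 j j := by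
        rw [pprod_succ X' r 1 (by omega)]; exact mk'
      have eY : pprod X (r + 1) 1 i j = X (r + 1) i j * pprod X r 1 j j := by
        rw [pprod_succ X r 1 (by omega)]; exact mkx
      have kp := (key (r + 1) h2 i j hdivm).2
      have main : pprod X (r + 1) 1 i i * (X' (r + 1) i j * pprod X' r 1 j j)
          = pprod X' (r + 1) 1 i i * (X (r + 1) i j * pprod X r 1 j j) := by
        rw [← eY', ← eY]; exact kp
      have drel1 := hdrel (r + 1) h2 i
      have drel2 := hdrel r hrL j
      have h6 : d (r + 1) i * X' (r + 1) i j = X (r + 1) i j * d r j := by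
        apply mul_left_cancel₀ (hY'kk (r + 1) h2 i)
        apply mul_right_cancel₀ (hY'kk r hrL j)
        linear_combination main + (X' (r + 1) i j * pprod X' r 1 j j) * drel1
          - (pprod X' (r + 1) 1 i i * X (r + 1) i j) * drel2
      have hdI := hdne (r + 1) i
      field_simp
      linear_combination h6
    · have hx0 : X (r + 1) i j = 0 := by
        by_contra h0
        exact hmem ((hsupp (r + 1) (by omega) h2) ▸
          (show (i, j) ∈ msupp (X (r + 1)) from h0))
      have hx'0 : X' (r + 1) i j = 0 := by
        by_contra h0
        exact hmem (hsupp' (r + 1) (by omega) h2 (show (i, j) ∈ msupp (X' (r + 1)) from h0))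
      rw [hx0, hx'0, mul_zero, zero_mul]
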